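/- arXiv:math/0503221 — 4 statements merged into one kernel-verified Lean document; each statement's English description precedes it below -/
import Mathlib

section
/- Let μ be a probability measure on ℝ^d and let q ∈ [1, 2]. For any real-valued function u ∈ L¹(μ) ∩ L^q(μ), setting ū := ∫ u dμ, one has (∫|u|^q dμ)^{2/q} ≥ |ū|² + (q−1) (∫|u − ū|^q dμ)^{2/q}. -/
open MeasureTheory Real Filter
open scoped ENNReal RealInnerProductSpace

noncomputable section

/-- Euclidean space `ℝ^d`. -/
abbrev Ed (d : ℕ) : Type := EuclideanSpace ℝ (Fin d)

/-- `u ∈ H¹(μ)`: `u` is (weakly) differentiable with `u` and `|∇u|` in `L²(μ)`. -/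
def MemH1 {d : ℕ} (μ : Measure (Ed d)) (u : Ed d → ℝ) : Prop :=
  Differentiable ℝ u ∧ MemLp u 2 μ ∧ MemLp (fun x => ‖fderiv ℝ u x‖) 2 μ

/-- The generalized Poincaré (convex Sobolev) inequality with exponent `p` and constant `C`. -/
def GenPoincare {d : ℕ} (μ : Measure (Ed d)) (p C : ℝ) : Prop :=
  ∀ u : Ed d → ℝ, MemH1 μ u →
    1 / (p - 1) * ((∫ x, u x ^ 2 ∂μ) - (∫ x, |u x| ^ (2 / p) ∂μ) ^ p)
      ≤ C * ∫ x, ‖fderiv ℝ u x‖ ^ 2 ∂μ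

/-- The Poincaré (spectral gap) inequality with constant `C`. -/
def Poincare {d : ℕ} (μ : Measure (Ed d)) (C : ℝ) : Prop :=
  ∀ u : Ed d → ℝ, MemH1 μ u →
    (∫ x, (u x - ∫ y, u y ∂μ) ^ 2 ∂μ) ≤ C * ∫ x, ‖fderiv ℝ u x‖ ^ 2 ∂μ

/-- The (tight) logarithmic Sobolev inequality with constant `C`. -/
def LogSob {d : ℕ} (μ : Measure (Ed d)) (C : ℝ) : Prop :=
  ∀ u : Ed d → ℝ, MemH1 μ u →
    (∫ x, u x ^ 2 * Real.log (u x ^ 2 / ∫ y, u y ^ 2 ∂μ) ∂μ)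
      ≤ C * ∫ x, ‖fderiv ℝ u x‖ ^ 2 ∂μ

/-- The Laplacian `ΔZ = ∑ᵢ ∂²Z/∂xᵢ²`. -/
def lap {d : ℕ} (Z : Ed d → ℝ) (x : Ed d) : ℝ :=
  ∑ i : Fin d,
    fderiv ℝ (fun y => fderiv ℝ Z y (EuclideanSpace.single i 1)) x (EuclideanSpace.single i 1)

/-- The `L^r(ν)` norm `(∫ |Z|^r dν)^{1/r}`. -/
def Lnorm {d : ℕ} (ν : Measure (Ed d)) (r : ℝ) (Z : Ed d → ℝ) : ℝ :=
  (∫ x, |Z x| ^ r ∂ν) ^ (1 / r)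

/-!
For `1 ≤ q ≤ 2` the space `L^q` is 2-uniformly convex with constant `q - 1` (Ball–Carlen–Lieb):
`2‖f‖² + 2(q - 1)‖g‖² ≤ ‖f + g‖² + ‖f - g‖²` for the `L^q` norm. This follows by integrating the
two-point inequality `(a² + (q - 1)b²)^{q/2} ≤ (|a + b|^q + |a - b|^q) / 2`, using Minkowski's
inequality in `L^{q/2}` (reversed, as `q/2 ≤ 1`) and convexity of `t ↦ t^{2/q}`.

With `v = u - ū` and `h(s) = ‖ū + s v‖²`, uniform convexity applied to `f = ū + s v`, `g = s v`
gives `2 h(s) + 2(q - 1)‖v‖² s² ≤ h(0) + h(2s)`, while Jensen's inequality gives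
`h(s) ≥ (∫ (ū + s v) dμ)² = ū² = h(0)`. Iterating the first inequality from `s = 2⁻ⁿ` up to
`s = 1` and letting `n → ∞` yields `h(1) ≥ h(0) + (q - 1)‖v‖²`.
-/

open Set

lemma two_mul_mul_le_one_add_rpow_sub_one_sub_rpow {r t : ℝ} (hr0 : 0 ≤ r) (hr1 : r ≤ 1)
    (ht : t ∈ Icc (0 : ℝ) 1) : 2 * r * t ≤ (1 + t) ^ r - (1 - t) ^ r := by
  let F : ℝ → ℝ := fun x => (1 + x) ^ r - (1 - x) ^ r - 2 * r * x
  suffices MonotoneOn F (Icc 0 1) by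
    have := this (left_mem_Icc.2 zero_le_one) ht ht.1
    norm_num [F] at this
    linarith
  refine monotoneOn_of_hasDerivWithinAt_nonneg
    (f' := fun x => r * ((1 + x) ^ (r - 1) + (1 - x) ^ (r - 1) - 2)) (convex_Icc 0 1)
    (by fun_prop (disch := assumption)) (fun x hx => ?_) (fun x hx => ?_)
  all_goals obtain ⟨hx0, hx1⟩ : x ∈ Ioo 0 1 := by rwa [interior_Icc] at hx
  · have hplus := ((hasDerivAt_id' x).const_add 1).rpow_const (p := r) (by left; linarith)
    have hminus := ((hasDerivAt_id' x).const_sub 1).rpow_const (p := r) (by left; linarith)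
    exact ((hplus.sub hminus).sub ((hasDerivAt_id' x).const_mul (2 * r))).hasDerivWithinAt
      |>.congr_deriv (by ring)
  · -- AM–GM: the two powers have product `(1 - x ^ 2) ^ (r - 1) ≥ 1`.
    have hprod : 1 ≤ (1 + x) ^ (r - 1) * (1 - x) ^ (r - 1) := by
      rw [← mul_rpow (by linarith) (by linarith)]
      exact one_le_rpow_of_pos_of_le_one_of_nonpos (by nlinarith) (by nlinarith) (by linarith)
    have hplus := rpow_pos_of_pos (show 0 < 1 + x by linarith) (r - 1)
    have hminus := rpow_pos_of_pos (show 0 < 1 - x by linarith) (r - 1)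
    have hsum : 2 ≤ (1 + x) ^ (r - 1) + (1 - x) ^ (r - 1) := by
      nlinarith [sq_nonneg ((1 + x) ^ (r - 1) - (1 - x) ^ (r - 1))]
    exact mul_nonneg hr0 (by linarith)

lemma one_add_mul_sq_rpow_le {q t : ℝ} (hq1 : 1 ≤ q) (hq2 : q ≤ 2) (ht : t ∈ Icc (0 : ℝ) 1) :
    (1 + (q - 1) * t ^ 2) ^ (q / 2) ≤ ((1 + t) ^ q + (1 - t) ^ q) / 2 := by
  let F : ℝ → ℝ := fun x => ((1 + x) ^ q + (1 - x) ^ q) / 2 - (1 + (q - 1) * x ^ 2) ^ (q / 2)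
  suffices MonotoneOn F (Icc 0 1) by
    have := this (left_mem_Icc.2 zero_le_one) ht ht.1
    norm_num [F] at this
    linarith
  have hbase : ∀ x : ℝ, 1 ≤ 1 + (q - 1) * x ^ 2 := fun x => by nlinarith [sq_nonneg x]
  refine monotoneOn_of_hasDerivWithinAt_nonneg
    (f' := fun x => q / 2 * ((1 + x) ^ (q - 1) - (1 - x) ^ (q - 1))
      - q * (q - 1) * x * (1 + (q - 1) * x ^ 2) ^ (q / 2 - 1)) (convex_Icc 0 1)
    (by fun_prop (disch := positivity)) (fun x hx => ?_) (fun x hx => ?_)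
  all_goals obtain ⟨hx0, hx1⟩ : x ∈ Ioo 0 1 := by rwa [interior_Icc] at hx
  · have hplus := ((hasDerivAt_id' x).const_add 1).rpow_const (p := q) (by left; linarith)
    have hminus := ((hasDerivAt_id' x).const_sub 1).rpow_const (p := q) (by left; linarith)
    have hbump := (((hasDerivAt_pow 2 x).const_mul (q - 1)).const_add 1).rpow_const (p := q / 2)
      (by left; linarith [hbase x])
    exact (((hplus.add hminus).div_const 2).sub hbump).hasDerivWithinAt
      |>.congr_deriv (by ring)
  · have hpsi := two_mul_mul_le_one_add_rpow_sub_one_sub_rpow (r := q - 1) (by linarith)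
      (by linarith) ⟨hx0.le, hx1.le⟩
    have hle1 : (1 + (q - 1) * x ^ 2) ^ (q / 2 - 1) ≤ 1 :=
      rpow_le_one_of_one_le_of_nonpos (hbase x) (by linarith)
    have hqx : 0 ≤ q * (q - 1) * x := mul_nonneg (mul_nonneg (by linarith) (by linarith)) hx0.le
    nlinarith [mul_le_of_le_one_right hqx hle1,
      mul_le_mul_of_nonneg_left hpsi (by linarith : 0 ≤ q / 2)]

lemma sq_rpow_div_two (x q : ℝ) : (x ^ 2) ^ (q / 2) = |x| ^ q := by
  rw [← sq_abs, ← rpow_natCast, ← rpow_mul (abs_nonneg x)]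
  ring_nf

lemma sq_add_mul_sq_rpow_le_of_le {q a b : ℝ} (hq1 : 1 ≤ q) (hq2 : q ≤ 2) (hb : 0 ≤ b)
    (hba : b ≤ a) : (a ^ 2 + (q - 1) * b ^ 2) ^ (q / 2) ≤ ((a + b) ^ q + (a - b) ^ q) / 2 := by
  have ha : 0 ≤ a := hb.trans hba
  obtain ⟨t, ht, rfl⟩ : ∃ t ∈ Icc (0 : ℝ) 1, b = a * t := by
    rcases ha.eq_or_lt with rfl | ha
    · exact ⟨0, left_mem_Icc.2 zero_le_one, by linarith⟩
    · exact ⟨b / a, ⟨div_nonneg hb ha.le, div_le_one_of_le₀ hba ha.le⟩, by field_simp⟩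
  calc (a ^ 2 + (q - 1) * (a * t) ^ 2) ^ (q / 2)
      = a ^ q * (1 + (q - 1) * t ^ 2) ^ (q / 2) := by
        rw [show a ^ 2 + (q - 1) * (a * t) ^ 2 = a ^ 2 * (1 + (q - 1) * t ^ 2) by ring,
          mul_rpow (sq_nonneg a) (by nlinarith [ht.1]), sq_rpow_div_two, abs_of_nonneg ha]
    _ ≤ a ^ q * (((1 + t) ^ q + (1 - t) ^ q) / 2) := by
        gcongr; exact one_add_mul_sq_rpow_le hq1 hq2 ht
    _ = ((a + a * t) ^ q + (a - a * t) ^ q) / 2 := by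
        rw [show a + a * t = a * (1 + t) by ring, show a - a * t = a * (1 - t) by ring,
          mul_rpow ha (by linarith [ht.1]), mul_rpow ha (by linarith [ht.2])]
        ring

lemma sq_add_mul_sq_rpow_le {q : ℝ} (hq1 : 1 ≤ q) (hq2 : q ≤ 2) (a b : ℝ) :
    (a ^ 2 + (q - 1) * b ^ 2) ^ (q / 2) ≤ (|a + b| ^ q + |a - b| ^ q) / 2 := by
  wlog hba : |b| ≤ |a| generalizing a b
  · have hsq : a ^ 2 ≤ b ^ 2 := sq_le_sq.2 (le_of_not_ge hba)
    calc (a ^ 2 + (q - 1) * b ^ 2) ^ (q / 2) ≤ (b ^ 2 + (q - 1) * a ^ 2) ^ (q / 2) := by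
          gcongr ?_ ^ _
          nlinarith
      _ ≤ (|b + a| ^ q + |b - a| ^ q) / 2 := this b a (le_of_not_ge hba)
      _ = (|a + b| ^ q + |a - b| ^ q) / 2 := by rw [add_comm b a, abs_sub_comm]
  wlog ha : 0 ≤ a generalizing a b
  · have := this (-a) (-b) (by simpa only [abs_neg]) (by linarith)
    rwa [neg_sq, neg_sq, ← neg_add, neg_sub_neg, abs_neg, abs_sub_comm] at this
  wlog hb : 0 ≤ b generalizing b
  · have := this (-b) (by rwa [abs_neg]) (by linarith)
    rwa [neg_sq, ← sub_eq_add_neg, sub_neg_eq_add, add_comm (|a - b| ^ q)] at this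
  rw [abs_of_nonneg hb, abs_of_nonneg ha] at hba
  rw [abs_of_nonneg (by linarith), abs_of_nonneg (by linarith)]
  exact sq_add_mul_sq_rpow_le_of_le hq1 hq2 hb hba

-- Hölder's inequality for two terms, from concavity of `t ↦ t ^ r` at `x / a` and `y / b`.
lemma rpow_mul_rpow_add_rpow_mul_rpow_le {r a b x y : ℝ} (hr0 : 0 ≤ r) (hr1 : r ≤ 1)
    (ha : 0 < a) (hb : 0 < b) (hx : 0 ≤ x) (hy : 0 ≤ y) :
    a ^ (1 - r) * x ^ r + b ^ (1 - r) * y ^ r ≤ (a + b) ^ (1 - r) * (x + y) ^ r := by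
  have hab : 0 < a + b := add_pos ha hb
  have hconc := (concaveOn_rpow hr0 hr1).2 (x := x / a) (y := y / b) (div_nonneg hx ha.le)
    (div_nonneg hy hb.le) (div_nonneg ha.le hab.le) (div_nonneg hb.le hab.le)
    (by field_simp)
  have hmid : a / (a + b) * (x / a) + b / (a + b) * (y / b) = (x + y) / (a + b) := by
    field_simp
  simp only [smul_eq_mul, hmid] at hconc
  rw [div_rpow hx ha.le, div_rpow hy hb.le, div_rpow (by positivity) hab.le] at hconc
  rw [rpow_sub ha, rpow_sub hb, rpow_sub hab, rpow_one, rpow_one, rpow_one]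
  have := rpow_pos_of_pos ha r
  have := rpow_pos_of_pos hb r
  have := rpow_pos_of_pos hab r
  calc a / a ^ r * x ^ r + b / b ^ r * y ^ r
      = (a + b) * (a / (a + b) * (x ^ r / a ^ r) + b / (a + b) * (y ^ r / b ^ r)) := by
        field_simp
    _ ≤ (a + b) * ((x + y) ^ r / (a + b) ^ r) := by gcongr
    _ = (a + b) / (a + b) ^ r * (x + y) ^ r := by ring

lemma add_div_two_rpow_le {q X Y : ℝ} (hq0 : 0 < q) (hq2 : q ≤ 2) (hX : 0 ≤ X) (hY : 0 ≤ Y) :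
    ((X + Y) / 2) ^ (2 / q) ≤ (X ^ (2 / q) + Y ^ (2 / q)) / 2 := by
  have := (convexOn_rpow (p := 2 / q) (by rw [le_div_iff₀ hq0]; linarith)).2 hX hY
    (by norm_num : (0 : ℝ) ≤ 1 / 2) (by norm_num : (0 : ℝ) ≤ 1 / 2) (by norm_num)
  simp only [smul_eq_mul] at this
  calc ((X + Y) / 2) ^ (2 / q) = (1 / 2 * X + 1 / 2 * Y) ^ (2 / q) := by ring_nf
    _ ≤ 1 / 2 * X ^ (2 / q) + 1 / 2 * Y ^ (2 / q) := this
    _ = (X ^ (2 / q) + Y ^ (2 / q)) / 2 := by ring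

lemma rpow_rpow_two_div {x q : ℝ} (hx : 0 ≤ x) (hq : q ≠ 0) : (x ^ q) ^ (2 / q) = x ^ 2 := by
  rw [← rpow_mul hx, mul_div_cancel₀ _ hq, rpow_two]

lemma two_pow_mul_le_of_two_mul_le {D : ℝ → ℝ} (hD : ∀ s, 2 * D s ≤ D (2 * s)) (n : ℕ) (s : ℝ) :
    2 ^ n * D s ≤ D (2 ^ n * s) := by
  induction n generalizing s with
  | zero => simp
  | succ n ih =>
    calc 2 ^ (n + 1) * D s = 2 ^ n * (2 * D s) := by ring
      _ ≤ 2 ^ n * D (2 * s) := by gcongr; exact hD s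
      _ ≤ D (2 ^ (n + 1) * s) := by rw [pow_succ, mul_assoc]; exact ih (2 * s)

lemma add_le_of_two_mul_add_le {h : ℝ → ℝ} {k : ℝ} (hmin : ∀ s, h 0 ≤ h s)
    (hconv : ∀ s, 2 * h s + 2 * k * s ^ 2 ≤ h 0 + h (2 * s)) : h 0 + k ≤ h 1 := by
  -- `D` at least doubles when its argument does, and `D s ≥ -k s²`; so `D 1 ≥ 2ⁿ D 2⁻ⁿ ≥ -k 2⁻ⁿ`.
  let D : ℝ → ℝ := fun s => h s - h 0 - k * s ^ 2
  have hdouble : ∀ s, 2 * D s ≤ D (2 * s) := fun s => by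
    simp only [D]; linarith [hconv s]
  have hlower : ∀ n : ℕ, -k * (1 / 2) ^ n ≤ D 1 := fun n => by
    have hmul := two_pow_mul_le_of_two_mul_le hdouble n ((1 / 2) ^ n)
    rw [← mul_pow, mul_one_div_cancel two_ne_zero, one_pow] at hmul
    calc -k * (1 / 2) ^ n = 2 ^ n * (-k * ((1 / 2) ^ n) ^ 2) := by
          rw [one_div, inv_pow]; field_simp
      _ ≤ 2 ^ n * D ((1 / 2) ^ n) := by gcongr; simp only [D]; linarith [hmin ((1 / 2) ^ n)]
      _ ≤ D 1 := hmul
  have hlim : Tendsto (fun n : ℕ => -k * (1 / 2 : ℝ) ^ n) atTop (nhds 0) := by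
    simpa using (tendsto_pow_atTop_nhds_zero_of_lt_one (r := (1 / 2 : ℝ)) (by norm_num)
      (by norm_num)).const_mul (-k)
  have := le_of_tendsto' hlim hlower
  simp only [D] at this
  linarith

section Integral

variable {α : Type*} [MeasurableSpace α] {μ : Measure α}

lemma MeasureTheory.MemLp.integrable_abs_rpow {q : ℝ} (hq : 0 < q) {f : α → ℝ}
    (hf : MemLp f (ENNReal.ofReal q) μ) : Integrable (fun x => |f x| ^ q) μ := by
  simpa [ENNReal.toReal_ofReal hq.le] using
    hf.integrable_norm_rpow (by simpa using hq) ENNReal.ofReal_ne_top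

-- Minkowski's inequality in `L^r`, reversed since `r ≤ 1`.
lemma integral_rpow_add_integral_rpow_le {r : ℝ} (hr0 : 0 < r) (hr1 : r ≤ 1) {F G : α → ℝ}
    (hF : ∀ x, 0 ≤ F x) (hG : ∀ x, 0 ≤ G x) (hFi : Integrable (fun x => F x ^ r) μ)
    (hGi : Integrable (fun x => G x ^ r) μ) (hFGi : Integrable (fun x => (F x + G x) ^ r) μ) :
    (∫ x, F x ^ r ∂μ) ^ r⁻¹ + (∫ x, G x ^ r ∂μ) ^ r⁻¹ ≤ (∫ x, (F x + G x) ^ r ∂μ) ^ r⁻¹ := by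
  set A := ∫ x, F x ^ r ∂μ
  set B := ∫ x, G x ^ r ∂μ
  set C := ∫ x, (F x + G x) ^ r ∂μ
  have hA : 0 ≤ A := integral_nonneg fun x => rpow_nonneg (hF x) r
  have hB : 0 ≤ B := integral_nonneg fun x => rpow_nonneg (hG x) r
  have hAC : A ≤ C := integral_mono hFi hFGi fun x =>
    rpow_le_rpow (hF x) (le_add_of_nonneg_right (hG x)) hr0.le
  have hBC : B ≤ C := integral_mono hGi hFGi fun x =>
    rpow_le_rpow (hG x) (le_add_of_nonneg_left (hF x)) hr0.le
  rcases hA.eq_or_lt with hA0 | hA0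
  · rw [← hA0, zero_rpow (inv_ne_zero hr0.ne'), zero_add]
    gcongr
  rcases hB.eq_or_lt with hB0 | hB0
  · rw [← hB0, zero_rpow (inv_ne_zero hr0.ne'), add_zero]
    gcongr
  set a := A ^ r⁻¹
  set b := B ^ r⁻¹
  have ha : 0 < a := rpow_pos_of_pos hA0 _
  have hb : 0 < b := rpow_pos_of_pos hB0 _
  -- Integrating the pointwise bound with weights `a, b` gives `a + b ≤ (a + b) ^ (1 - r) * C`.
  have hint : a ^ (1 - r) * A + b ^ (1 - r) * B ≤ (a + b) ^ (1 - r) * C := by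
    rw [← integral_const_mul, ← integral_const_mul, ← integral_const_mul,
      ← integral_add (hFi.const_mul _) (hGi.const_mul _)]
    exact integral_mono ((hFi.const_mul _).add (hGi.const_mul _)) (hFGi.const_mul _)
      fun x => rpow_mul_rpow_add_rpow_mul_rpow_le hr0.le hr1 ha hb (hF x) (hG x)
  have hpow : ∀ c : ℝ, 0 < c → c ^ (1 - r) * c ^ r = c := fun c hc => by
    rw [← rpow_add hc, sub_add_cancel, rpow_one]
  rw [← rpow_inv_rpow hA hr0.ne', ← rpow_inv_rpow hB hr0.ne', hpow a ha, hpow b hb] at hint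
  have hrC : (a + b) ^ r ≤ C := by
    have := hpow (a + b) (add_pos ha hb)
    nlinarith [rpow_pos_of_pos (add_pos ha hb) (1 - r)]
  calc a + b = ((a + b) ^ r) ^ r⁻¹ := (rpow_rpow_inv (add_pos ha hb).le hr0.ne').symm
    _ ≤ C ^ r⁻¹ := by gcongr

lemma integral_abs_rpow_add_mul_le_integral_sq_add_mul_rpow {q : ℝ} (hq1 : 1 ≤ q) (hq2 : q ≤ 2)
    {f g : α → ℝ} (hf : MemLp f (ENNReal.ofReal q) μ) (hg : MemLp g (ENNReal.ofReal q) μ)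
    (hfg : Integrable (fun x => (f x ^ 2 + (q - 1) * g x ^ 2) ^ (q / 2)) μ) :
    (∫ x, |f x| ^ q ∂μ) ^ (2 / q) + (q - 1) * (∫ x, |g x| ^ q ∂μ) ^ (2 / q)
      ≤ (∫ x, (f x ^ 2 + (q - 1) * g x ^ 2) ^ (q / 2) ∂μ) ^ (2 / q) := by
  have hq0 : 0 < q := by linarith
  have hq_sub : 0 ≤ q - 1 := by linarith
  have hG : ∀ x, ((q - 1) * g x ^ 2) ^ (q / 2) = (q - 1) ^ (q / 2) * |g x| ^ q := fun x => by
    rw [mul_rpow hq_sub (sq_nonneg _), sq_rpow_div_two]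
  have hrev := integral_rpow_add_integral_rpow_le (μ := μ) (by linarith : 0 < q / 2)
    (by linarith) (F := fun x => f x ^ 2) (G := fun x => (q - 1) * g x ^ 2)
    (fun x => sq_nonneg _) (fun x => mul_nonneg hq_sub (sq_nonneg _))
    (by simpa only [sq_rpow_div_two] using hf.integrable_abs_rpow hq0)
    (by simpa only [hG] using (hg.integrable_abs_rpow hq0).const_mul _) hfg
  simp only [sq_rpow_div_two, hG, integral_const_mul, inv_div] at hrev
  rwa [mul_rpow (rpow_nonneg hq_sub _) (integral_nonneg fun x => by positivity),
    ← rpow_mul hq_sub, show q / 2 * (2 / q) = 1 by field_simp, rpow_one] at hrev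

lemma two_mul_integral_rpow_add_le {q : ℝ} (hq1 : 1 ≤ q) (hq2 : q ≤ 2) {f g : α → ℝ}
    (hf : MemLp f (ENNReal.ofReal q) μ) (hg : MemLp g (ENNReal.ofReal q) μ) :
    2 * (∫ x, |f x| ^ q ∂μ) ^ (2 / q) + 2 * (q - 1) * (∫ x, |g x| ^ q ∂μ) ^ (2 / q)
      ≤ (∫ x, |f x + g x| ^ q ∂μ) ^ (2 / q) + (∫ x, |f x - g x| ^ q ∂μ) ^ (2 / q) := by
  have hq0 : 0 < q := by linarith
  have hadd : Integrable (fun x => |f x + g x| ^ q) μ := (hf.add hg).integrable_abs_rpow hq0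
  have hsub : Integrable (fun x => |f x - g x| ^ q) μ := (hf.sub hg).integrable_abs_rpow hq0
  have hpt : ∀ x, (f x ^ 2 + (q - 1) * g x ^ 2) ^ (q / 2)
      ≤ (|f x + g x| ^ q + |f x - g x| ^ q) / 2 := fun x => sq_add_mul_sq_rpow_le hq1 hq2 _ _
  have hmeas : AEStronglyMeasurable (fun x => (f x ^ 2 + (q - 1) * g x ^ 2) ^ (q / 2)) μ := by
    have := hf.1; have := hg.1
    fun_prop (disch := linarith)
  have hfg : Integrable (fun x => (f x ^ 2 + (q - 1) * g x ^ 2) ^ (q / 2)) μ :=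
    ((hadd.add hsub).div_const 2).mono' hmeas <| .of_forall fun x => by
      rw [norm_of_nonneg (by positivity)]; exact hpt x
  have hmean : ∫ x, (f x ^ 2 + (q - 1) * g x ^ 2) ^ (q / 2) ∂μ
      ≤ ((∫ x, |f x + g x| ^ q ∂μ) + ∫ x, |f x - g x| ^ q ∂μ) / 2 := by
    rw [← integral_add hadd hsub, ← integral_div]
    exact integral_mono hfg ((hadd.add hsub).div_const 2) hpt
  have hX : 0 ≤ ∫ x, |f x + g x| ^ q ∂μ := integral_nonneg fun x => by positivity
  have hY : 0 ≤ ∫ x, |f x - g x| ^ q ∂μ := integral_nonneg fun x => by positivity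
  calc 2 * (∫ x, |f x| ^ q ∂μ) ^ (2 / q) + 2 * (q - 1) * (∫ x, |g x| ^ q ∂μ) ^ (2 / q)
      ≤ 2 * (∫ x, (f x ^ 2 + (q - 1) * g x ^ 2) ^ (q / 2) ∂μ) ^ (2 / q) := by
        linarith [integral_abs_rpow_add_mul_le_integral_sq_add_mul_rpow hq1 hq2 hf hg hfg]
    _ ≤ 2 * (((∫ x, |f x + g x| ^ q ∂μ) + ∫ x, |f x - g x| ^ q ∂μ) / 2) ^ (2 / q) := by
        gcongr
    _ ≤ _ := by linarith [add_div_two_rpow_le hq0 hq2 hX hY]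

lemma integral_abs_const_mul_rpow_rpow_two_div {q : ℝ} (hq : q ≠ 0) (c : ℝ) (f : α → ℝ) :
    (∫ x, |c * f x| ^ q ∂μ) ^ (2 / q) = c ^ 2 * (∫ x, |f x| ^ q ∂μ) ^ (2 / q) := by
  simp_rw [abs_mul, mul_rpow (abs_nonneg c) (abs_nonneg _)]
  rw [integral_const_mul, mul_rpow (by positivity) (integral_nonneg fun x => by positivity),
    rpow_rpow_two_div (abs_nonneg c) hq, sq_abs]

lemma sq_integral_le_integral_abs_rpow [IsProbabilityMeasure μ] {q : ℝ} (hq : 1 ≤ q)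
    {f : α → ℝ} (hf : MemLp f (ENNReal.ofReal q) μ) :
    (∫ x, f x ∂μ) ^ 2 ≤ (∫ x, |f x| ^ q ∂μ) ^ (2 / q) := by
  have hq0 : 0 < q := by linarith
  have hjensen : (∫ x, |f x| ∂μ) ^ q ≤ ∫ x, |f x| ^ q ∂μ :=
    (convexOn_rpow hq).map_integral_le (continuous_rpow_const hq0.le).continuousOn isClosed_Ici
      (.of_forall fun x => abs_nonneg (f x)) (hf.integrable (ENNReal.one_le_ofReal.2 hq)).abs
      (hf.integrable_abs_rpow hq0)
  calc (∫ x, f x ∂μ) ^ 2 = (|∫ x, f x ∂μ| ^ q) ^ (2 / q) := by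
        rw [rpow_rpow_two_div (abs_nonneg _) hq0.ne', sq_abs]
    _ ≤ ((∫ x, |f x| ∂μ) ^ q) ^ (2 / q) := by gcongr; exact abs_integral_le_integral_abs
    _ ≤ (∫ x, |f x| ^ q ∂μ) ^ (2 / q) := by gcongr

lemma two_mul_integral_rpow_line_le {q : ℝ} (hq1 : 1 ≤ q) (hq2 : q ≤ 2) {f v : α → ℝ}
    (hf : MemLp f (ENNReal.ofReal q) μ) (hv : MemLp v (ENNReal.ofReal q) μ) (s : ℝ) :
    2 * (∫ x, |f x + s * v x| ^ q ∂μ) ^ (2 / q)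
        + 2 * ((q - 1) * (∫ x, |v x| ^ q ∂μ) ^ (2 / q)) * s ^ 2
      ≤ (∫ x, |f x| ^ q ∂μ) ^ (2 / q) + (∫ x, |f x + 2 * s * v x| ^ q ∂μ) ^ (2 / q) := by
  have hfs : MemLp (fun x => f x + s * v x) (ENNReal.ofReal q) μ := hf.add (hv.const_mul s)
  have := two_mul_integral_rpow_add_le hq1 hq2 hfs (hv.const_mul s)
  have hdouble : ∀ x, f x + s * v x + s * v x = f x + 2 * s * v x := fun x => by ring
  simp only [integral_abs_const_mul_rpow_rpow_two_div (by linarith : q ≠ 0), add_sub_cancel_right,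
    hdouble] at this
  linarith

theorem sq_integral_add_mul_integral_abs_sub_rpow_le [IsProbabilityMeasure μ] {q : ℝ}
    (hq1 : 1 ≤ q) (hq2 : q ≤ 2) {u : α → ℝ} (hu : MemLp u (ENNReal.ofReal q) μ) :
    (∫ x, u x ∂μ) ^ 2 + (q - 1) * (∫ x, |u x - ∫ y, u y ∂μ| ^ q ∂μ) ^ (2 / q)
      ≤ (∫ x, |u x| ^ q ∂μ) ^ (2 / q) := by
  set m := ∫ x, u x ∂μ
  have hv : MemLp (fun x => u x - m) (ENNReal.ofReal q) μ := hu.sub (memLp_const m)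
  let h : ℝ → ℝ := fun s => (∫ x, |m + s * (u x - m)| ^ q ∂μ) ^ (2 / q)
  have h0 : h 0 = m ^ 2 := by simp [h, rpow_rpow_two_div (abs_nonneg m) (by linarith : q ≠ 0)]
  have hmin : ∀ s, h 0 ≤ h s := fun s => by
    have hui := hu.integrable (ENNReal.one_le_ofReal.2 hq1)
    have hvi : Integrable (fun x => u x - m) μ := hui.sub (integrable_const m)
    have hmean : ∫ x, (m + s * (u x - m)) ∂μ = m := by
      rw [integral_add (integrable_const m) (hvi.const_mul s),
        integral_const_mul, integral_sub hui (integrable_const m)]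
      simp [m]
    rw [h0, ← hmean]
    exact sq_integral_le_integral_abs_rpow hq1 ((memLp_const m).add (hv.const_mul s))
  have hconv : ∀ s, 2 * h s + 2 * ((q - 1) * (∫ x, |u x - m| ^ q ∂μ) ^ (2 / q)) * s ^ 2
      ≤ h 0 + h (2 * s) := fun s => by
    simpa [h] using two_mul_integral_rpow_line_le hq1 hq2 (memLp_const m) hv s
  simpa [h0, h] using add_le_of_two_mul_add_le hmin hconv

end Integral

theorem mean_moment_lower_bound_general
    (d : ℕ) (μ : Measure (Ed d)) (hμ : IsProbabilityMeasure μ)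
    (q : ℝ) (hq : q ∈ Set.Icc (1 : ℝ) 2)
    (u : Ed d → ℝ) (huq : MemLp u (ENNReal.ofReal q) μ)
    (ubar : ℝ) (hubar : ubar = ∫ x, u x ∂μ) :
    (∫ x, |u x| ^ q ∂μ) ^ (2 / q)
      ≥ |ubar| ^ 2 + (q - 1) * (∫ x, |u x - ubar| ^ q ∂μ) ^ (2 / q) := by
  subst hubar
  rw [sq_abs]
  exact sq_integral_add_mul_integral_abs_sub_rpow_le hq.1 hq.2 huq

/-- **Lemma 4.** For `q ∈ [1,2]` and `u ∈ L¹(μ) ∩ L^q(μ)` with mean `ū`,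
`(∫|u|^q dμ)^{2/q} ≥ |ū|² + (q−1)(∫|u−ū|^q dμ)^{2/q}`. -/
theorem mean_moment_lower_bound
    (d : ℕ) (μ : Measure (Ed d)) (hμ : IsProbabilityMeasure μ)
    (q : ℝ) (hq : q ∈ Set.Icc (1 : ℝ) 2)
    (u : Ed d → ℝ) (hu1 : Integrable u μ) (huq : MemLp u (ENNReal.ofReal q) μ)
    (ubar : ℝ) (hubar : ubar = ∫ x, u x ∂μ) :
    (∫ x, |u x| ^ q ∂μ) ^ (2 / q)
      ≥ |ubar| ^ 2 + (q - 1) * (∫ x, |u x - ubar| ^ q ∂μ) ^ (2 / q) :=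
  mean_moment_lower_bound_general d μ hμ q hq u huq ubar hubar
end
end

section
/- Let μ be a probability measure on ℝ^d, p ∈ (1, 2], and suppose μ satisfies the generalized Poincaré inequality with constant C, i.e. (1/(p-1)) [∫|u|² dμ − (∫|u|^{2/p} dμ)^p] ≤ C ∫|∇u|² dμ for all u ∈ H¹(μ). Then μ satisfies the Poincaré (spectral gap) inequality with constant (p/2)·C, i.e. ∫|u − ū|² dμ ≤ (p/2)·C ∫|∇u|² dμ for all u ∈ H¹(μ), where ū = ∫u dμ. Equivalently, the optimal constants satisfy C_p(μ) ≥ (2/p) C₂(μ). -/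
open MeasureTheory Real Filter
open scoped ENNReal RealInnerProductSpace

noncomputable section

/-!
Apply the generalized inequality to `v = 1 + ε u` and let `ε → 0`. The energy of `v` is
`ε² ∫ |∇u|²`, while a second-order expansion (dominated convergence, using
`| |1 + t|^a - 1 - a t | ≤ 3 t²` for `a ∈ [1, 2]`) shows that the deficit
`∫ v² - (∫ |v|^{2/p})^p` equals `(2 (p - 1) / p) Var(u) ε² + o(ε²)`.
-/

open Topology ProbabilityTheory

theorem tendsto_one_add_rpow_sub_div_sq (a : ℝ) :
    Tendsto (fun s : ℝ => ((1 + s) ^ a - 1 - a * s) / s ^ 2) (𝓝[≠] 0)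
      (𝓝 (a * (a - 1) / 2)) := by
  have hderiv (b : ℝ) : ∀ᶠ s in 𝓝 (0 : ℝ),
      HasDerivAt (fun s : ℝ => (1 + s) ^ b) (b * (1 + s) ^ (b - 1)) s := by
    filter_upwards [Ioi_mem_nhds (show (-1 : ℝ) < 0 by norm_num)] with s hs
    have hs' : 1 + s ≠ 0 := by linarith [Set.mem_Ioi.mp hs]
    simpa using ((hasDerivAt_id s).const_add 1).rpow_const (p := b) (Or.inl hs')
  have hslope : Tendsto (slope (fun s : ℝ => (1 + s) ^ (a - 1)) 0) (𝓝[≠] 0) (𝓝 (a - 1)) := by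
    simpa using hasDerivAt_iff_tendsto_slope.mp (hderiv (a - 1)).self_of_nhds
  -- after one application of L'Hôpital the quotient is `a / 2` times a slope of `(1 + s) ^ (a - 1)`
  refine HasDerivAt.lhopital_zero_nhdsNE (f' := fun s => a * (1 + s) ^ (a - 1) - a)
    (g' := fun s => 2 * s) ?_ ?_ ?_ ?_ ?_ ?_
  · filter_upwards [(hderiv a).filter_mono nhdsWithin_le_nhds] with s hs
    simpa using (hs.sub_const 1).fun_sub ((hasDerivAt_id s).const_mul a)
  · exact .of_forall fun s => by simpa [mul_comm] using hasDerivAt_pow 2 s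
  · filter_upwards [self_mem_nhdsWithin] with s hs
    exact mul_ne_zero two_ne_zero hs
  · refine tendsto_nhdsWithin_of_tendsto_nhds ?_
    have hcont : ContinuousAt (fun s : ℝ => (1 + s) ^ a - 1 - a * s) 0 :=
      (((continuousAt_const.add continuousAt_id).rpow_const (Or.inl (by norm_num))).sub
        continuousAt_const).sub (continuousAt_const.mul continuousAt_id)
    simpa using hcont.tendsto
  · exact tendsto_nhdsWithin_of_tendsto_nhds
      (by simpa using (continuous_pow 2).tendsto (0 : ℝ))
  · convert hslope.const_mul (a / 2) using 2 with s
    · simp only [slope_def_field, add_zero, sub_zero, one_rpow]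
      field_simp
    · ring

def rpowTaylorQuot (a : ℝ) : ℝ → ℝ :=
  Function.update (fun s => ((1 + s) ^ a - 1 - a * s) / s ^ 2) 0 (a * (a - 1) / 2)

theorem one_add_rpow_eq_rpowTaylorQuot (a s : ℝ) :
    (1 + s) ^ a = 1 + a * s + s ^ 2 * rpowTaylorQuot a s := by
  rcases eq_or_ne s 0 with rfl | hs
  · simp
  · rw [rpowTaylorQuot, Function.update_of_ne hs]
    field_simp
    ring

theorem continuousAt_rpowTaylorQuot (a : ℝ) : ContinuousAt (rpowTaylorQuot a) 0 :=
  continuousAt_update_same.mpr (tendsto_one_add_rpow_sub_div_sq a)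

/-- `f ε = 1 + b ε + c ε² + o(ε²)` implies
`f ε ^ a = 1 + a b ε + (a c + a (a - 1) / 2 b²) ε² + o(ε²)`. -/
theorem tendsto_rpow_sub_div_sq {l : Filter ℝ} (hl : l ≤ 𝓝[≠] 0) {f : ℝ → ℝ} {a b c : ℝ}
    (hf : Tendsto (fun ε => (f ε - 1 - b * ε) / ε ^ 2) l (𝓝 c)) :
    Tendsto (fun ε => (f ε ^ a - 1 - a * b * ε) / ε ^ 2) l
      (𝓝 (a * c + a * (a - 1) / 2 * b ^ 2)) := by
  set R := fun ε => (f ε - 1 - b * ε) / ε ^ 2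
  have hε : Tendsto (fun ε : ℝ => ε) l (𝓝 0) :=
    tendsto_id.mono_left (hl.trans nhdsWithin_le_nhds)
  have hslope : Tendsto (fun ε => b + ε * R ε) l (𝓝 b) := by
    simpa using tendsto_const_nhds.add (hε.mul hf)
  have hquot :
      Tendsto (fun ε => rpowTaylorQuot a (ε * (b + ε * R ε))) l (𝓝 (a * (a - 1) / 2)) := by
    have hs : Tendsto (fun ε => ε * (b + ε * R ε)) l (𝓝 0) := by simpa using hε.mul hslope
    have := (continuousAt_rpowTaylorQuot a).tendsto.comp hs
    rwa [rpowTaylorQuot, Function.update_self] at this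
  rw [mul_comm _ (b ^ 2)]
  refine ((hf.const_mul a).add ((hslope.pow 2).mul hquot)).congr' ?_
  filter_upwards [hl self_mem_nhdsWithin] with ε (hε0 : ε ≠ 0)
  have hf_eq : f ε = 1 + ε * (b + ε * R ε) := by
    simp only [R]
    field_simp
    ring
  rw [hf_eq, one_add_rpow_eq_rpowTaylorQuot]
  field_simp
  ring

theorem tendsto_abs_one_add_mul_rpow_sub_div_sq (a c : ℝ) :
    Tendsto (fun ε => (|1 + ε * c| ^ a - 1 - a * c * ε) / ε ^ 2) (𝓝[≠] 0)
      (𝓝 (a * (a - 1) / 2 * c ^ 2)) := by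
  suffices h : Tendsto (fun ε => (|1 + ε * c| - 1 - c * ε) / ε ^ 2) (𝓝[≠] 0) (𝓝 0) by
    simpa using tendsto_rpow_sub_div_sq le_rfl h (a := a)
  refine tendsto_const_nhds.congr' ?_
  have hpos : ∀ᶠ ε in 𝓝 (0 : ℝ), 0 < 1 + ε * c :=
    ((by fun_prop : Continuous fun ε : ℝ => 1 + ε * c).tendsto' 0 1 (by simp)).eventually_const_lt
      one_pos
  filter_upwards [nhdsWithin_le_nhds hpos] with ε hε
  rw [abs_of_pos hε]
  ring

theorem abs_abs_one_add_rpow_sub_le {a : ℝ} (ha1 : 1 ≤ a) (ha2 : a ≤ 2) (t : ℝ) :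
    |(|1 + t|) ^ a - 1 - a * t| ≤ 3 * t ^ 2 := by
  have hx : 0 ≤ |1 + t| := abs_nonneg _
  -- `x ^ a = x * x ^ (a - 1)`, and Bernoulli's inequality bounds the concave power `x ^ (a - 1)`
  have hupper : |1 + t| ^ a ≤ |1 + t| * (1 + (a - 1) * (|1 + t| - 1)) := by
    calc |1 + t| ^ a = |1 + t| * |1 + t| ^ (a - 1) := by
          rw [← rpow_one_add' hx (by linarith), add_sub_cancel]
      _ ≤ |1 + t| * (1 + (a - 1) * (|1 + t| - 1)) := by
          gcongr
          simpa using rpow_one_add_le_one_add_mul_self (s := |1 + t| - 1) (by linarith)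
            (by linarith) (by linarith)
  rw [abs_le]
  rcases le_or_gt (-1) t with ht | ht
  · rw [abs_of_nonneg (by linarith)] at hupper ⊢
    have hlower := one_add_mul_self_le_rpow_one_add ht ha1
    constructor <;> nlinarith
  · rw [abs_of_neg (by linarith)] at hupper ⊢
    have hpow_nonneg := rpow_nonneg (show 0 ≤ -(1 + t) by linarith) a
    constructor <;> nlinarith

theorem norm_abs_one_add_mul_rpow_sub_div_sq_le {a : ℝ} (ha1 : 1 ≤ a) (ha2 : a ≤ 2)
    (ε c : ℝ) :
    ‖(|1 + ε * c| ^ a - 1 - a * c * ε) / ε ^ 2‖ ≤ 3 * c ^ 2 := by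
  rcases eq_or_ne ε 0 with rfl | hε
  · simpa using mul_nonneg zero_le_three (sq_nonneg c)
  rw [norm_div, norm_of_nonneg (sq_nonneg ε), div_le_iff₀ (by positivity)]
  calc ‖(|1 + ε * c|) ^ a - 1 - a * c * ε‖ ≤ 3 * (ε * c) ^ 2 := by
        simpa [mul_comm, mul_assoc, mul_left_comm] using
          abs_abs_one_add_rpow_sub_le ha1 ha2 (ε * c)
    _ = 3 * c ^ 2 * ε ^ 2 := by ring

section Integral

variable {X : Type*} [MeasurableSpace X] {μ : Measure X} {u : X → ℝ}

theorem integrable_abs_one_add_mul_rpow_sub_div_sq (hu : MemLp u 2 μ) {a : ℝ} (ha1 : 1 ≤ a)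
    (ha2 : a ≤ 2) (ε : ℝ) :
    Integrable (fun x => (|1 + ε * u x| ^ a - 1 - a * u x * ε) / ε ^ 2) μ := by
  have hmeas := hu.aestronglyMeasurable
  exact (hu.integrable_sq.const_mul 3).mono' (by fun_prop (disch := linarith))
    (.of_forall fun x => norm_abs_one_add_mul_rpow_sub_div_sq_le ha1 ha2 ε (u x))

theorem tendsto_integral_abs_one_add_mul_rpow_sub_div_sq [IsProbabilityMeasure μ]
    (hu : MemLp u 2 μ) {a : ℝ} (ha1 : 1 ≤ a) (ha2 : a ≤ 2) :
    Tendsto (fun ε => ((∫ x, |1 + ε * u x| ^ a ∂μ) - 1 - a * (∫ x, u x ∂μ) * ε) / ε ^ 2)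
      (𝓝[≠] 0) (𝓝 (a * (a - 1) / 2 * ∫ x, u x ^ 2 ∂μ)) := by
  have hquot := integrable_abs_one_add_mul_rpow_sub_div_sq hu ha1 ha2
  have hdom := tendsto_integral_filter_of_dominated_convergence (l := 𝓝[≠] (0 : ℝ)) (μ := μ)
    (fun x => 3 * u x ^ 2) (.of_forall fun ε => (hquot ε).aestronglyMeasurable)
    (.of_forall fun ε => .of_forall fun x =>
      norm_abs_one_add_mul_rpow_sub_div_sq_le ha1 ha2 ε (u x))
    (hu.integrable_sq.const_mul 3)
    (.of_forall fun x => tendsto_abs_one_add_mul_rpow_sub_div_sq a (u x))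
  rw [integral_const_mul] at hdom
  refine hdom.congr' ?_
  filter_upwards [self_mem_nhdsWithin] with ε (hε : ε ≠ 0)
  have hu_int : Integrable u μ := hu.integrable one_le_two
  have hpow : Integrable (fun x => |1 + ε * u x| ^ a) μ := by
    refine (((hquot ε).mul_const (ε ^ 2)).add ((integrable_const 1).add
      ((hu_int.const_mul a).mul_const ε))).congr (.of_forall fun x => ?_)
    simp only [Pi.add_apply]
    field_simp
    ring
  rw [integral_div, integral_sub (hpow.sub' (integrable_const 1))
    ((hu_int.const_mul a).mul_const ε), integral_sub hpow (integrable_const 1),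
    integral_mul_const, integral_const_mul]
  simp

theorem tendsto_genPoincare_deficit_div_sq [IsProbabilityMeasure μ] (hu : MemLp u 2 μ) {p : ℝ}
    (hp1 : 1 < p) (hp2 : p ≤ 2) :
    Tendsto
      (fun ε => ((∫ x, (1 + ε * u x) ^ 2 ∂μ) - (∫ x, |1 + ε * u x| ^ (2 / p) ∂μ) ^ p) / ε ^ 2)
      (𝓝[≠] 0) (𝓝 (2 * (p - 1) / p * variance u μ)) := by
  have hp0 : 0 < p := by linarith
  have hq1 : 1 ≤ 2 / p := by rw [le_div_iff₀ hp0]; linarith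
  have hq2 : 2 / p ≤ 2 := by rw [div_le_iff₀ hp0]; linarith
  have hsq := tendsto_integral_abs_one_add_mul_rpow_sub_div_sq hu one_le_two le_rfl
  simp only [rpow_two, sq_abs] at hsq
  have hpow := tendsto_rpow_sub_div_sq (a := p) le_rfl
    (tendsto_integral_abs_one_add_mul_rpow_sub_div_sq hu hq1 hq2)
  rw [variance_eq_sub hu]
  convert hsq.sub hpow using 2 with ε
  · field_simp
    ring
  · simp only [Pi.pow_apply]
    field_simp
    ring

end Integral

theorem norm_fderiv_const_add_mul {E : Type*} [NormedAddCommGroup E] [NormedSpace ℝ E]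
    {u : E → ℝ} (hu : Differentiable ℝ u) (c ε : ℝ) (x : E) :
    ‖fderiv ℝ (fun x => c + ε * u x) x‖ = |ε| * ‖fderiv ℝ u x‖ := by
  rw [fderiv_const_add, fderiv_const_mul (hu x), norm_smul, norm_eq_abs]

theorem MemH1.const_add_mul {d : ℕ} {μ : Measure (Ed d)} [IsFiniteMeasure μ] {u : Ed d → ℝ}
    (hu : MemH1 μ u) (c ε : ℝ) : MemH1 μ (fun x => c + ε * u x) := by
  refine ⟨(hu.1.const_mul ε).const_add c, (memLp_const c).add (hu.2.1.const_mul ε), ?_⟩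
  simpa only [norm_fderiv_const_add_mul hu.1] using hu.2.2.const_mul |ε|

/-- The generalized Poincaré inequality with exponent `p ∈ (1,2]` and constant `C`
implies the Poincaré (spectral gap) inequality with constant `(p/2) C`; equivalently,
the optimal constants satisfy `C_p(μ) ≥ (2/p) C₂(μ)`. -/
theorem poincare_of_genPoincare
    (d : ℕ) (μ : Measure (Ed d)) (hμ : IsProbabilityMeasure μ)
    (p : ℝ) (hp : p ∈ Set.Ioc (1 : ℝ) 2)
    (C : ℝ) (hGP : GenPoincare μ p C) :
    Poincare μ (p / 2 * C) := by
  obtain ⟨hp1, hp2⟩ := hp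
  intro u hu
  set energy := ∫ x, ‖fderiv ℝ u x‖ ^ 2 ∂μ
  have hdeficit := tendsto_genPoincare_deficit_div_sq hu.2.1 hp1 hp2
  have hbound : ∀ᶠ ε in 𝓝[≠] (0 : ℝ),
      ((∫ x, (1 + ε * u x) ^ 2 ∂μ) - (∫ x, |1 + ε * u x| ^ (2 / p) ∂μ) ^ p) / ε ^ 2
        ≤ (p - 1) * (C * energy) := by
    filter_upwards [self_mem_nhdsWithin] with ε (hε : ε ≠ 0)
    have hGP_v := hGP _ (hu.const_add_mul 1 ε)
    simp only [norm_fderiv_const_add_mul hu.1, mul_pow, sq_abs, integral_const_mul] at hGP_v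
    rw [one_div, inv_mul_le_iff₀ (by linarith)] at hGP_v
    rw [div_le_iff₀ (by positivity)]
    linarith
  have hvar := le_of_tendsto hdeficit hbound
  rw [← variance_eq_integral hu.2.1.aemeasurable]
  have hp0 : 0 < p - 1 := by linarith
  calc variance u μ = p / (2 * (p - 1)) * (2 * (p - 1) / p * variance u μ) := by field_simp
    _ ≤ p / (2 * (p - 1)) * ((p - 1) * (C * energy)) :=
        mul_le_mul_of_nonneg_left hvar (by positivity)
    _ = p / 2 * C * energy := by field_simp
end
end

section
/- Let μ be a probability measure on ℝ^d satisfying the Poincaré (spectral gap) inequality with constant C₂, i.e. ∫|u − ū|² dμ ≤ C₂ ∫|∇u|² dμ for all u ∈ H¹(μ) with ū = ∫u dμ. Then for every p ∈ (1, 2], μ satisfies the generalized Poincaré inequality with constant C₂/(p−1), i.e. (1/(p-1)) [∫|u|² dμ − (∫|u|^{2/p} dμ)^p] ≤ (C₂/(p−1)) ∫|∇u|² dμ for all u ∈ H¹(μ). -/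
/-! Since `2 / p ≥ 1`, Jensen's inequality gives
`(∫ u)² ≤ (∫ |u|)² ≤ (∫ |u|^(2/p))^p`, so `∫ u² - (∫ |u|^(2/p))^p` is at most the variance of `u`,
which the Poincaré inequality bounds by `C₂ ∫ |∇u|²`. -/

open MeasureTheory Real Filter ProbabilityTheory
open scoped ENNReal RealInnerProductSpace

noncomputable section

section ProbabilityMeasure

variable {Ω : Type*} [MeasurableSpace Ω] {μ : Measure Ω} [IsProbabilityMeasure μ] {u : Ω → ℝ}

theorem integral_sub_integral_sq_eq (hu : MemLp u 2 μ) :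
    ∫ x, (u x - ∫ y, u y ∂μ) ^ 2 ∂μ = ∫ x, u x ^ 2 ∂μ - (∫ x, u x ∂μ) ^ 2 := by
  rw [← variance_eq_integral hu.aemeasurable, variance_eq_sub hu]
  rfl

theorem MeasureTheory.MemLp.integrable_abs_rpow_of_le_two (hu : MemLp u 2 μ) {q : ℝ}
    (hq0 : 0 ≤ q) (hq2 : q ≤ 2) : Integrable (fun x => |u x| ^ q) μ := by
  have huq : MemLp u (ENNReal.ofReal q) μ :=
    hu.mono_exponent (by simpa using ENNReal.ofReal_le_ofReal hq2)
  simpa [ENNReal.toReal_ofReal hq0] using huq.integrable_norm_rpow'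

theorem rpow_integral_abs_le_integral_abs_rpow (hu : Integrable u μ) {q : ℝ} (hq : 1 ≤ q)
    (huq : Integrable (fun x => |u x| ^ q) μ) :
    (∫ x, |u x| ∂μ) ^ q ≤ ∫ x, |u x| ^ q ∂μ :=
  (convexOn_rpow hq).map_integral_le
    (continuousOn_id.rpow_const fun _ _ => Or.inr (by linarith)) isClosed_Ici
    (ae_of_all _ fun x => abs_nonneg (u x)) hu.abs huq

theorem sq_integral_le_integral_abs_rpow_pow (hu : MemLp u 2 μ) {p : ℝ} (hp1 : 1 ≤ p)
    (hp2 : p ≤ 2) : (∫ x, u x ∂μ) ^ 2 ≤ (∫ x, |u x| ^ (2 / p) ∂μ) ^ p := by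
  have hp0 : 0 < p := by linarith
  have hq : 1 ≤ 2 / p := by rw [le_div_iff₀ hp0]; linarith
  have hL1 : 0 ≤ ∫ x, |u x| ∂μ := integral_nonneg fun x => abs_nonneg (u x)
  calc (∫ x, u x ∂μ) ^ 2 ≤ (∫ x, |u x| ∂μ) ^ 2 := by
        rw [← sq_abs]
        exact pow_le_pow_left₀ (abs_nonneg _) abs_integral_le_integral_abs 2
    _ = ((∫ x, |u x| ∂μ) ^ (2 / p)) ^ p := by
        rw [← rpow_mul hL1, div_mul_cancel₀ _ hp0.ne']
        norm_cast
    _ ≤ (∫ x, |u x| ^ (2 / p) ∂μ) ^ p :=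
        rpow_le_rpow (rpow_nonneg hL1 _)
          (rpow_integral_abs_le_integral_abs_rpow (hu.integrable one_le_two) hq
            (hu.integrable_abs_rpow_of_le_two (by positivity) (div_le_self zero_le_two hp1)))
          hp0.le

end ProbabilityMeasure

theorem Poincare.integral_sq_sub_le {d : ℕ} {μ : Measure (Ed d)} [IsProbabilityMeasure μ]
    {C : ℝ} (hP : Poincare μ C) {u : Ed d → ℝ} (hu : MemH1 μ u) {p : ℝ} (hp1 : 1 ≤ p)
    (hp2 : p ≤ 2) :
    ∫ x, u x ^ 2 ∂μ - (∫ x, |u x| ^ (2 / p) ∂μ) ^ p ≤ C * ∫ x, ‖fderiv ℝ u x‖ ^ 2 ∂μ := by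
  have hmean := sq_integral_le_integral_abs_rpow_pow hu.2.1 hp1 hp2
  have hvar := hP u hu
  rw [integral_sub_integral_sq_eq hu.2.1] at hvar
  linarith

/-- The Poincaré (spectral gap) inequality with constant `C₂` implies, for every
`p ∈ (1,2]`, the generalized Poincaré inequality with constant `C₂/(p−1)`. -/
theorem genPoincare_of_poincare
    (d : ℕ) (μ : Measure (Ed d)) (hμ : IsProbabilityMeasure μ)
    (C₂ : ℝ) (hP : Poincare μ C₂) :
    ∀ p ∈ Set.Ioc (1 : ℝ) 2, GenPoincare μ p (C₂ / (p - 1)) := by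
  rintro p ⟨hp1, hp2⟩ u hu
  rw [div_eq_mul_one_div C₂ (p - 1), mul_comm C₂, mul_assoc]
  exact mul_le_mul_of_nonneg_left (hP.integral_sq_sub_le hu hp1.le hp2)
    (one_div_nonneg.mpr (by linarith))
end
end

section
/- Let d ≥ 1, p ∈ (1, 2), p' = p/(p-1), and let W, Z : ℝ^d → ℝ be measurable such that dν = e^{-W} dx and dμ = e^{-2Z} dν are probability measures on ℝ^d, with Z ∈ L^{p'}(dν). Then for every measurable g : ℝ^d → ℝ with g ∈ L²(ν), writing v := g e^Z, one has (∫|v|^{2/p} dμ)^p − (∫|g|^{2/p} dν)^p ≥ −2(p−1) ‖Z‖_{L^{p'}(ν)} ∫|g|² dν. -/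
open MeasureTheory Real Filter
open scoped ENNReal RealInnerProductSpace

noncomputable section

/-!
With `φ = |g|^{2/p}` and `c = 2 - 2/p = 2(p-1)/p`, the change of density turns `∫ |v|^{2/p} dμ`
into `∫ φ e^{-cZ} dν`. Since `e^{-cZ} ≥ 1 - cZ`, Hölder's inequality bounds this from below by
`A - c ‖φ‖_p ‖Z‖_{p'}`, where `A = ∫ φ dν ≤ ‖φ‖_p` by Jensen and `‖φ‖_p^p = ∫ g² dν`. The tangent
line of the convex function `t ↦ t^p` at `A` then gives the claim, because `p c = 2(p-1)`.
-/

namespace Real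

theorem rpow_sub_one_mul_self {x : ℝ} (hx : 0 ≤ x) {p : ℝ} (hp : p ≠ 0) :
    x ^ (p - 1) * x = x ^ p := by
  rw [← rpow_add_one' hx (by simpa using hp), sub_add_cancel]

theorem mul_rpow_sub_one_mul_sub_le_rpow_sub_rpow {p a b : ℝ} (hp : 1 < p) (ha : 0 ≤ a)
    (hb : 0 ≤ b) : p * a ^ (p - 1) * (b - a) ≤ b ^ p - a ^ p := by
  have hp0 : p ≠ 0 := by positivity
  have young := young_inequality_of_nonneg hb (rpow_nonneg ha (p - 1)) (.conjExponent hp)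
  rw [← rpow_mul ha, conjExponent, mul_div_cancel₀ p (sub_ne_zero.2 hp.ne')] at young
  have hself := rpow_sub_one_mul_self ha hp0
  field_simp at young
  nlinarith

end Real

variable {α : Type*} [MeasurableSpace α] {ν : Measure α}

theorem integrable_of_isFiniteMeasure_withDensity_ofReal {f : α → ℝ}
    (hf : AEStronglyMeasurable f ν) (hf0 : ∀ x, 0 ≤ f x)
    [IsFiniteMeasure (ν.withDensity fun x => ENNReal.ofReal (f x))] : Integrable f ν := by
  refine ⟨hf, ?_⟩
  rw [hasFiniteIntegral_iff_ofReal (.of_forall hf0), ← setLIntegral_univ,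
    ← withDensity_apply _ .univ]
  exact measure_lt_top _ _

theorem MeasureTheory.MemLp.abs_rpow_two_div {g : α → ℝ} (hg : MemLp g 2 ν) {p : ℝ}
    (hp : 0 < p) :
    MemLp (fun x => |g x| ^ (2 / p)) (ENNReal.ofReal p) ν := by
  have h2p : 2 / ENNReal.ofReal (2 / p) = ENNReal.ofReal p := by
    rw [← ENNReal.ofReal_ofNat, ← ENNReal.ofReal_div_of_pos (by positivity),
      div_div_cancel₀ two_ne_zero]
  simpa only [h2p, Real.norm_eq_abs, ENNReal.toReal_ofReal (by positivity : 0 ≤ 2 / p)]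
    using hg.norm_rpow_div (ENNReal.ofReal (2 / p))

theorem memLp_exp_div_mul_of_integrable_exp_mul {Z : α → ℝ} (hZ : Measurable Z) {a q : ℝ}
    (hq : 0 < q) (hint : Integrable (fun x => exp (a * Z x)) ν) :
    MemLp (fun x => exp (a / q * Z x)) (ENNReal.ofReal q) ν := by
  refine (integrable_norm_rpow_iff (by fun_prop) (by simpa using hq) ENNReal.ofReal_ne_top).1 ?_
  refine hint.congr (.of_forall fun x => ?_)
  dsimp only
  rw [ENNReal.toReal_ofReal hq.le, norm_of_nonneg (exp_pos _).le, ← exp_mul]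
  field_simp

theorem integral_rpow_abs_mul_exp_withDensity {Z : α → ℝ} (hZ : Measurable Z) (g : α → ℝ)
    (r : ℝ) :
    ∫ x, |g x * exp (Z x)| ^ r ∂ν.withDensity (fun x => ENNReal.ofReal (exp (-2 * Z x)))
      = ∫ x, |g x| ^ r * exp (-((2 - r) * Z x)) ∂ν := by
  rw [integral_withDensity_eq_integral_toReal_smul (by fun_prop)
    (.of_forall fun _ => ENNReal.ofReal_lt_top)]
  congr 1 with x
  rw [ENNReal.toReal_ofReal (exp_pos _).le, smul_eq_mul, abs_mul, abs_of_pos (exp_pos _),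
    mul_rpow (abs_nonneg _) (exp_pos _).le, ← exp_mul, mul_left_comm, ← exp_add]
  ring_nf

theorem integral_le_integral_rpow_rpow_one_div [IsProbabilityMeasure ν] {p : ℝ} (hp : 1 < p)
    {f : α → ℝ} (hf0 : ∀ x, 0 ≤ f x) (hf : MemLp f (ENNReal.ofReal p) ν) :
    ∫ x, f x ∂ν ≤ (∫ x, f x ^ p ∂ν) ^ (1 / p) := by
  simpa using integral_mul_le_Lp_mul_Lq_of_nonneg (.conjExponent hp) (.of_forall hf0)
    (.of_forall fun _ => zero_le_one) hf (memLp_const (1 : ℝ))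

theorem integral_sub_mul_le_integral_mul_exp_neg_mul [IsFiniteMeasure ν] {p q c : ℝ}
    (hpq : p.HolderConjugate q) (hc : 0 ≤ c) {φ Z : α → ℝ} (hφ0 : ∀ x, 0 ≤ φ x)
    (hφ : MemLp φ (ENNReal.ofReal p) ν) (hZ : MemLp Z (ENNReal.ofReal q) ν)
    (hint : Integrable (fun x => φ x * exp (-(c * Z x))) ν) :
    ∫ x, φ x ∂ν - c * ((∫ x, φ x ^ p ∂ν) ^ (1 / p) * (∫ x, |Z x| ^ q ∂ν) ^ (1 / q))
      ≤ ∫ x, φ x * exp (-(c * Z x)) ∂ν := by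
  have := hpq.ennrealOfReal
  have hφi : Integrable φ ν := hφ.integrable (ENNReal.one_le_ofReal.2 hpq.lt.le)
  have hφZ : Integrable (fun x => φ x * Z x) ν := hφ.integrable_mul hZ
  have holder : ∫ x, φ x * Z x ∂ν
      ≤ (∫ x, φ x ^ p ∂ν) ^ (1 / p) * (∫ x, |Z x| ^ q ∂ν) ^ (1 / q) :=
    calc ∫ x, φ x * Z x ∂ν ≤ ∫ x, φ x * |Z x| ∂ν :=
          integral_mono hφZ (hφ.integrable_mul hZ.abs)
            fun x => mul_le_mul_of_nonneg_left (le_abs_self _) (hφ0 x)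
      _ ≤ _ := integral_mul_le_Lp_mul_Lq_of_nonneg hpq (.of_forall hφ0)
          (.of_forall fun x => abs_nonneg (Z x)) hφ hZ.abs
  have pointwise : ∀ x, φ x - c * (φ x * Z x) ≤ φ x * exp (-(c * Z x)) := fun x => by
    nlinarith [add_one_le_exp (-(c * Z x)), hφ0 x]
  calc ∫ x, φ x ∂ν - c * ((∫ x, φ x ^ p ∂ν) ^ (1 / p) * (∫ x, |Z x| ^ q ∂ν) ^ (1 / q))
      ≤ ∫ x, φ x ∂ν - c * ∫ x, φ x * Z x ∂ν := by gcongr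
    _ = ∫ x, (φ x - c * (φ x * Z x)) ∂ν := by
      rw [integral_sub hφi (hφZ.const_mul c), integral_const_mul]
    _ ≤ _ := integral_mono (hφi.sub (hφZ.const_mul c)) hint pointwise

theorem neg_mul_le_rpow_sub_rpow_of_sub_le {p A B E K : ℝ} (hp : 1 < p) (hA : 0 ≤ A)
    (hB : 0 ≤ B) (hE : 0 ≤ E) (hK : 0 ≤ K) (hAE : A ≤ E ^ (1 / p))
    (hAB : A - K * E ^ (1 / p) ≤ B) : -(p * K * E) ≤ B ^ p - A ^ p := by
  have hE' : (E ^ (1 / p)) ^ (p - 1) * E ^ (1 / p) = E := by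
    rw [rpow_sub_one_mul_self (rpow_nonneg hE _) (by positivity), ← rpow_mul hE,
      one_div_mul_cancel (by positivity), rpow_one]
  have hpow : A ^ (p - 1) ≤ (E ^ (1 / p)) ^ (p - 1) := rpow_le_rpow hA hAE (by linarith)
  calc -(p * K * E) = -(p * K * ((E ^ (1 / p)) ^ (p - 1) * E ^ (1 / p))) := by rw [hE']
    _ ≤ -(p * K * (A ^ (p - 1) * E ^ (1 / p))) := by gcongr
    _ = p * A ^ (p - 1) * (A - K * E ^ (1 / p) - A) := by ring
    _ ≤ p * A ^ (p - 1) * (B - A) := by gcongr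
    _ ≤ B ^ p - A ^ p := mul_rpow_sub_one_mul_sub_le_rpow_sub_rpow hp hA hB

theorem neg_mul_le_rpow_integral_mul_exp_sub_rpow_integral [IsProbabilityMeasure ν] {p q c : ℝ}
    (hpq : p.HolderConjugate q) (hc : 0 ≤ c) {φ Z : α → ℝ} (hφ0 : ∀ x, 0 ≤ φ x)
    (hφ : MemLp φ (ENNReal.ofReal p) ν) (hZ : MemLp Z (ENNReal.ofReal q) ν)
    (hint : Integrable (fun x => φ x * exp (-(c * Z x))) ν) :
    -(p * c * (∫ x, |Z x| ^ q ∂ν) ^ (1 / q) * ∫ x, φ x ^ p ∂ν)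
      ≤ (∫ x, φ x * exp (-(c * Z x)) ∂ν) ^ p - (∫ x, φ x ∂ν) ^ p := by
  have hZnorm : 0 ≤ (∫ x, |Z x| ^ q ∂ν) ^ (1 / q) :=
    rpow_nonneg (integral_nonneg fun _ => rpow_nonneg (abs_nonneg _) _) _
  have hlower := integral_sub_mul_le_integral_mul_exp_neg_mul hpq hc hφ0 hφ hZ hint
  have := neg_mul_le_rpow_sub_rpow_of_sub_le hpq.lt (integral_nonneg hφ0)
    (integral_nonneg fun x => mul_nonneg (hφ0 x) (exp_pos _).le)
    (integral_nonneg fun x => rpow_nonneg (hφ0 x) p) (mul_nonneg hc hZnorm)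
    (integral_le_integral_rpow_rpow_one_div hpq.lt hφ0 hφ) (Eq.trans_le (by ring) hlower)
  linarith

theorem jensen_lower_bound_for_B_general
    (d : ℕ) (p p' : ℝ) (hp : p ∈ Set.Ioo (1 : ℝ) 2) (hp' : p' = p / (p - 1))
    (Z : Ed d → ℝ) (hZmeas : Measurable Z)
    (ν μ : Measure (Ed d))
    (hμ : μ = ν.withDensity fun x => ENNReal.ofReal (Real.exp (-2 * Z x)))
    (hνprob : IsProbabilityMeasure ν) (hμprob : IsProbabilityMeasure μ)
    (hZLp : MemLp Z (ENNReal.ofReal p') ν)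
    (g : Ed d → ℝ) (hg : MemLp g 2 ν)
    (v : Ed d → ℝ) (hv : v = fun x => g x * Real.exp (Z x)) :
    (∫ x, |v x| ^ (2 / p) ∂μ) ^ p - (∫ x, |g x| ^ (2 / p) ∂ν) ^ p
      ≥ -2 * (p - 1) * Lnorm ν p' Z * ∫ x, g x ^ 2 ∂ν := by
  have hp1 : 1 < p := hp.1
  have hpq : p.HolderConjugate p' := (holderConjugate_iff_eq_conjExponent hp1).2 hp'
  set φ : Ed d → ℝ := fun x => |g x| ^ (2 / p)
  have hφ0 : ∀ x, 0 ≤ φ x := fun x => rpow_nonneg (abs_nonneg _) _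
  have hφp : ∫ x, φ x ^ p ∂ν = ∫ x, g x ^ 2 ∂ν := by
    congr 1 with x
    rw [← rpow_mul (abs_nonneg _), div_mul_cancel₀ _ hpq.ne_zero, rpow_two, sq_abs]
  have hφ : MemLp φ (ENNReal.ofReal p) ν := hg.abs_rpow_two_div hpq.pos
  have hψ : MemLp (fun x => exp (-((2 - 2 / p) * Z x))) (ENNReal.ofReal p') ν := by
    rw [hμ] at hμprob
    have hexp : Integrable (fun x => exp (-2 * Z x)) ν :=
      integrable_of_isFiniteMeasure_withDensity_ofReal (by fun_prop) fun _ => (exp_pos _).le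
    convert memLp_exp_div_mul_of_integrable_exp_mul hZmeas hpq.symm.pos hexp using 4 with x
    rw [hp']
    field_simp
  have hc : 0 ≤ 2 - 2 / p := by
    rw [sub_nonneg, div_le_iff₀ hpq.pos]
    linarith
  have := hpq.ennrealOfReal
  have key := neg_mul_le_rpow_integral_mul_exp_sub_rpow_integral hpq hc hφ0 hφ hZLp
    (hφ.integrable_mul hψ)
  rw [hφp] at key
  rw [hv, hμ, integral_rpow_abs_mul_exp_withDensity hZmeas, ge_iff_le]
  calc -2 * (p - 1) * Lnorm ν p' Z * ∫ x, g x ^ 2 ∂ν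
      = -(p * (2 - 2 / p) * Lnorm ν p' Z * ∫ x, g x ^ 2 ∂ν) := by
        field_simp
    _ ≤ _ := key

/-- The lower bound on `𝓑 = (∫|v|^{2/p} dμ)^p − (∫|g|^{2/p} dν)^p` for `v = g e^Z` and
`dμ = e^{-2Z} dν`: `𝓑 ≥ −2(p−1)‖Z‖_{L^{p'}(ν)} ∫|g|² dν`. -/
theorem jensen_lower_bound_for_B
    (d : ℕ) (hd : 1 ≤ d) (p p' : ℝ) (hp : p ∈ Set.Ioo (1 : ℝ) 2) (hp' : p' = p / (p - 1))
    (W Z : Ed d → ℝ) (hW : Measurable W) (hZmeas : Measurable Z)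
    (ν μ : Measure (Ed d))
    (hν : ν = volume.withDensity fun x => ENNReal.ofReal (Real.exp (-W x)))
    (hμ : μ = ν.withDensity fun x => ENNReal.ofReal (Real.exp (-2 * Z x)))
    (hνprob : IsProbabilityMeasure ν) (hμprob : IsProbabilityMeasure μ)
    (hZLp : MemLp Z (ENNReal.ofReal p') ν)
    (g : Ed d → ℝ) (hgmeas : Measurable g) (hg : MemLp g 2 ν)
    (v : Ed d → ℝ) (hv : v = fun x => g x * Real.exp (Z x)) :
    (∫ x, |v x| ^ (2 / p) ∂μ) ^ p - (∫ x, |g x| ^ (2 / p) ∂ν) ^ p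
      ≥ -2 * (p - 1) * Lnorm ν p' Z * ∫ x, g x ^ 2 ∂ν :=
  jensen_lower_bound_for_B_general d p p' hp hp' Z hZmeas ν μ hμ hνprob hμprob hZLp g hg v hv
end
end
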